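/- arXiv:2103.05816 — 2 statements merged into one kernel-verified Lean document; each statement's English description precedes it below -/
import Mathlib

section
/- The villainy of the 5-cycle C_5 is 2. -/
open Finset

variable {V : Type*}

/-- A proper coloring given as a function to ℕ. -/
def IsProperColoring (G : SimpleGraph V) (c : V → ℕ) : Prop :=
  ∀ ⦃u v⦄, G.Adj u v → c u ≠ c v

variable [Fintype V] [DecidableEq V]

/-- Two colorings use every color the same number of times. -/
def SameColorCounts (c c' : V → ℕ) : Prop :=
  ∀ k : ℕ, (univ.filter fun v => c v = k).card = (univ.filter fun v => c' v = k).card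

/-- The number of vertices on which two colorings differ. -/
def recolorCount (c c' : V → ℕ) : ℕ := (univ.filter fun v => c v ≠ c' v).card

/-- The ℕ-valued chromatic number. -/
noncomputable def chromNum (G : SimpleGraph V) : ℕ := G.chromaticNumber.toNat

/-- A proper coloring of `G` using exactly `χ(G)` colors. -/
noncomputable def IsOptimalColoring (G : SimpleGraph V) (f : V → ℕ) : Prop :=
  IsProperColoring G f ∧ (univ.image f).card = chromNum G

/-- The villainy of a coloring `c`: the least number of vertices that must be
recolored to obtain a proper coloring using each color as often as `c` does. -/
noncomputable def colVillainy (G : SimpleGraph V) (c : V → ℕ) : ℕ :=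
  sInf {n | ∃ c', IsProperColoring G c' ∧ SameColorCounts c c' ∧ recolorCount c c' = n}

/-- `c` is a permutation of the coloring `f`. -/
def IsPermutationOf (c f : V → ℕ) : Prop := ∃ σ : Equiv.Perm V, c = f ∘ σ

/-- The villainy of `G`: the maximum villainy over all permutations of optimal
proper colorings of `G`. -/
noncomputable def villainy (G : SimpleGraph V) : ℕ :=
  sSup {n | ∃ f c, IsOptimalColoring G f ∧ IsPermutationOf c f ∧ colVillainy G c = n}

/-!
Swapping the colors of the adjacent vertices `0` and `1` in the optimal coloring `0,1,0,1,2`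
of `C₅` gives an improper coloring. Repairing it changes at least one vertex, and a recoloring
with the same color counts never changes exactly one vertex, so its villainy is at least `2`.
Conversely, any three vertices of `C₅` contain an edge, so a permuted proper coloring uses each
color at most twice, and then a single transposition of two vertices makes it proper.
-/

omit [DecidableEq V] in
theorem SameColorCounts.symm {c c' : V → ℕ} (h : SameColorCounts c c') : SameColorCounts c' c :=
  fun k => (h k).symm

omit [DecidableEq V] in
theorem sameColorCounts_comp_perm (c : V → ℕ) (σ : Equiv.Perm V) :
    SameColorCounts c (c ∘ σ) :=
  fun _ => card_equiv σ.symm (by simp)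

theorem recolorCount_comp_swap_le (c : V → ℕ) (i j : V) :
    recolorCount c (c ∘ Equiv.swap i j) ≤ 2 := by
  refine (card_le_card (t := {i, j}) fun v hv => ?_).trans card_le_two
  by_contra hij
  simp only [mem_insert, mem_singleton, not_or] at hij
  simp [Equiv.swap_apply_of_ne_of_ne hij.1 hij.2] at hv

omit [DecidableEq V] in
theorem eq_of_recolorCount_eq_zero {c c' : V → ℕ} (h : recolorCount c c' = 0) : c = c' := by
  funext v
  by_contra hv
  simp only [recolorCount, card_eq_zero, filter_eq_empty_iff] at h
  exact h (mem_univ v) hv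

theorem recolorCount_ne_one {c c' : V → ℕ} (h : SameColorCounts c c') :
    recolorCount c c' ≠ 1 := by
  intro h1
  obtain ⟨v, hv⟩ := card_eq_one.1 h1
  have hdiff : ∀ u, c u ≠ c' u ↔ u = v := by simpa [Finset.ext_iff] using hv
  have hfiber : (univ.filter fun u => c' u = c v) = (univ.filter fun u => c u = c v).erase v := by
    ext u
    by_cases huv : u = v
    · simp [huv, Ne.symm ((hdiff v).2 rfl)]
    · simp [huv, not_not.1 (mt (hdiff u).1 huv)]
  have hv_mem : v ∈ univ.filter fun u => c u = c v := by simp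
  have hcount := h (c v)
  rw [hfiber, card_erase_of_mem hv_mem] at hcount
  have hpos := card_pos.2 ⟨v, hv_mem⟩
  omega

omit [DecidableEq V] in
theorem colVillainy_le_recolorCount {G : SimpleGraph V} {c c' : V → ℕ}
    (hc' : IsProperColoring G c') (h : SameColorCounts c c') :
    colVillainy G c ≤ recolorCount c c' :=
  Nat.sInf_le ⟨c', hc', h, rfl⟩

theorem two_le_colVillainy {G : SimpleGraph V} {c c' : V → ℕ} (hc : ¬IsProperColoring G c)
    (hc' : IsProperColoring G c') (h : SameColorCounts c c') : 2 ≤ colVillainy G c := by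
  have hne :
      {n | ∃ d, IsProperColoring G d ∧ SameColorCounts c d ∧ recolorCount c d = n}.Nonempty :=
    ⟨_, c', hc', h, rfl⟩
  obtain ⟨d, hd, hcd, hdn⟩ := Nat.sInf_mem hne
  rw [colVillainy, ← hdn]
  have h0 : recolorCount c d ≠ 0 := fun h0 => hc (eq_of_recolorCount_eq_zero h0 ▸ hd)
  have h1 := recolorCount_ne_one hcd
  omega

open SimpleGraph

theorem isProperColoring_cycleGraph_iff {n : ℕ} (c : Fin (n + 2) → ℕ) :
    IsProperColoring (cycleGraph (n + 2)) c ↔ ∀ x, c x ≠ c (x + 1) := by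
  refine ⟨fun h x => h (cycleGraph_adj.2 (Or.inr (by simp))), fun h u v huv => ?_⟩
  rcases cycleGraph_adj.1 huv with huv | huv
  · rw [sub_eq_iff_eq_add'] at huv
    exact huv ▸ (h v).symm
  · rw [sub_eq_iff_eq_add'] at huv
    exact huv ▸ h u

theorem cycleGraph_five_adj_of_three : ∀ x y z : Fin 5, x ≠ y → y ≠ z → x ≠ z →
    (cycleGraph 5).Adj x y ∨ (cycleGraph 5).Adj y z ∨ (cycleGraph 5).Adj x z := by
  decide

theorem IsProperColoring.cycleGraph_five_eq_or_eq_or_eq {f : Fin 5 → ℕ}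
    (hf : IsProperColoring (cycleGraph 5) f) {x y z : Fin 5} (hxy : f x = f y) (hyz : f y = f z) :
    x = y ∨ y = z ∨ x = z := by
  by_contra! h
  rcases cycleGraph_five_adj_of_three x y z h.1 h.2.1 h.2.2 with hadj | hadj | hadj
  exacts [hf hadj hxy, hf hadj hyz, hf hadj (hxy.trans hyz)]

/- If `c u = c (u + 1)`, no other vertex has that color. Swapping `u + 3` with `u + 1`
(resp. `u`) can only create a conflict if `c (u + 2) = c (u + 3)` (resp. `c (u + 4) = c (u + 3)`),
and these cannot both hold. -/
theorem exists_swap_isProperColoring_cycleGraph_five (c : Fin 5 → ℕ)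
    (hc : ∀ x y z, c x = c y → c y = c z → x = y ∨ y = z ∨ x = z) :
    ∃ i j, IsProperColoring (cycleGraph 5) (c ∘ Equiv.swap i j) := by
  by_cases hproper : IsProperColoring (cycleGraph 5) c
  · exact ⟨0, 0, by simpa using hproper⟩
  obtain ⟨u, hu⟩ : ∃ u, c u = c (u + 1) := by
    simpa [isProperColoring_cycleGraph_iff] using hproper
  have h2 : c (u + 2) ≠ c u := fun h => by simpa using hc _ _ _ h hu
  have h3 : c (u + 3) ≠ c u := fun h => by simpa using hc _ _ _ h hu
  have h4 : c (u + 4) ≠ c u := fun h => by simpa using hc _ _ _ h hu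
  have hnot_both : c (u + 2) ≠ c (u + 3) ∨ c (u + 3) ≠ c (u + 4) := by
    by_contra! h
    simpa using hc _ _ _ h.1 h.2
  have isProperColoring_of_rotated :
      ∀ g : Fin 5 → ℕ, (∀ k : Fin 5, g (u + k) ≠ g (u + k + 1)) →
        IsProperColoring (cycleGraph 5) g := fun g hg =>
    (isProperColoring_cycleGraph_iff g).2 fun x => by simpa using hg (x - u)
  rcases hnot_both with h | h
  · refine ⟨u + 1, u + 3, isProperColoring_of_rotated _ fun k => ?_⟩
    fin_cases k <;> simp [Equiv.swap_apply_def, add_assoc] <;> grind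
  · refine ⟨u, u + 3, isProperColoring_of_rotated _ fun k => ?_⟩
    fin_cases k <;> simp [Equiv.swap_apply_def, add_assoc] <;> grind

theorem colVillainy_cycleGraph_five_le_two {f : Fin 5 → ℕ}
    (hf : IsProperColoring (cycleGraph 5) f) (σ : Equiv.Perm (Fin 5)) :
    colVillainy (cycleGraph 5) (f ∘ σ) ≤ 2 := by
  obtain ⟨i, j, hij⟩ := exists_swap_isProperColoring_cycleGraph_five (f ∘ σ)
    fun _ _ _ hxy hyz => by simpa using hf.cycleGraph_five_eq_or_eq_or_eq hxy hyz
  exact (colVillainy_le_recolorCount hij (sameColorCounts_comp_perm _ _)).trans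
    (recolorCount_comp_swap_le _ i j)

theorem chromNum_cycleGraph_five : chromNum (cycleGraph 5) = 3 := by
  simp [chromNum, chromaticNumber_cycleGraph_of_odd 5 (by norm_num) (by decide)]

theorem isOptimalColoring_cycleGraph_five :
    IsOptimalColoring (cycleGraph 5) ![0, 1, 0, 1, 2] := by
  refine ⟨?_, ?_⟩
  · unfold IsProperColoring
    decide
  · rw [chromNum_cycleGraph_five]
    decide

theorem colVillainy_cycleGraph_five_swap_zero_one :
    colVillainy (cycleGraph 5) (![0, 1, 0, 1, 2] ∘ Equiv.swap 0 1) = 2 := by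
  have himproper : ¬IsProperColoring (cycleGraph 5) (![0, 1, 0, 1, 2] ∘ Equiv.swap 0 1) :=
    fun h => h (show (cycleGraph 5).Adj 1 2 by decide) rfl
  exact le_antisymm
    (colVillainy_cycleGraph_five_le_two isOptimalColoring_cycleGraph_five.1 _)
    (two_le_colVillainy himproper isOptimalColoring_cycleGraph_five.1
      (sameColorCounts_comp_perm _ _).symm)

theorem villainy_C5 : villainy (SimpleGraph.cycleGraph 5) = 2 := by
  refine IsGreatest.csSup_eq ⟨?_, ?_⟩
  · exact ⟨_, _, isOptimalColoring_cycleGraph_five, ⟨Equiv.swap 0 1, rfl⟩,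
      colVillainy_cycleGraph_five_swap_zero_one⟩
  · rintro n ⟨f, c, hf, ⟨σ, rfl⟩, rfl⟩
    exact colVillainy_cycleGraph_five_le_two hf.1 σ
end

section
/- For every r ≥ 1 and t ≥ 3, the graph K_{1,t} + rK_1 (a star with t leaves plus r isolated vertices) satisfies B(K_{1,t} + rK_1) ≥ 4; in particular its villainy is not 2. -/
open Finset

variable {V : Type*}

variable [Fintype V] [DecidableEq V]

/-- The star `K_{1,t}` with center `0` and `t` leaves. -/
def starGraph (t : ℕ) : SimpleGraph (Fin (t + 1)) :=
  SimpleGraph.fromRel fun a _ => a = 0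

/-! Give colour 1 to the centre and one isolated vertex and colour 0 to everything else: this is an
optimal 2-colouring. Permute it so that two leaves carry colour 1. A proper colouring with the same
colour counts has exactly two vertices of colour 1, so it must put colour 1 on the centre (otherwise
all `t ≥ 3` leaves would need it), hence on no leaf; the old and new colour-1 classes are then
disjoint and all four of their vertices change colour. -/

section Villainy

variable {α : Type*} [Fintype α] {G : SimpleGraph α}

theorem IsPermutationOf.sameColorCounts {c f : α → ℕ} (h : IsPermutationOf c f) :
    SameColorCounts c f := by
  obtain ⟨σ, rfl⟩ := h
  intro k
  exact card_equiv σ (by simp)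

theorem colVillainy_le_card (c : α → ℕ) : colVillainy G c ≤ Fintype.card α := by
  rcases Set.eq_empty_or_nonempty
    {n | ∃ c', IsProperColoring G c' ∧ SameColorCounts c c' ∧ recolorCount c c' = n} with h | h
  · simp [colVillainy, h]
  · obtain ⟨c', -, -, hc'⟩ := Nat.sInf_mem h
    rw [colVillainy, ← hc']
    exact card_le_univ _

theorem le_colVillainy {c f : α → ℕ} {n : ℕ} (hf : IsProperColoring G f)
    (hcf : SameColorCounts c f)
    (h : ∀ c', IsProperColoring G c' → SameColorCounts c c' → n ≤ recolorCount c c') :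
    n ≤ colVillainy G c :=
  le_csInf ⟨_, f, hf, hcf, rfl⟩ (by rintro _ ⟨c', hc', hcc', rfl⟩; exact h c' hc' hcc')

theorem colVillainy_le_villainy {c f : α → ℕ} (hf : IsOptimalColoring G f)
    (hcf : IsPermutationOf c f) : colVillainy G c ≤ villainy G :=
  le_csSup ⟨Fintype.card α, by rintro _ ⟨f, c, -, -, rfl⟩; exact colVillainy_le_card c⟩
    ⟨f, c, hf, hcf, rfl⟩

end Villainy

section IndicatorColoring

variable {α : Type*} [DecidableEq α]

def indicatorColoring (S : Finset α) (v : α) : ℕ := if v ∈ S then 1 else 0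

theorem indicatorColoring_eq_indicatorColoring_iff {S T : Finset α} {u v : α} :
    indicatorColoring S u = indicatorColoring T v ↔ (u ∈ S ↔ v ∈ T) := by
  unfold indicatorColoring; split_ifs <;> simp_all

theorem mem_of_isProperColoring_indicatorColoring {G : SimpleGraph α} {T N : Finset α} {x : α}
    (hT : IsProperColoring G (indicatorColoring T)) (hN : ∀ y ∈ N, G.Adj x y)
    (hcard : #T < #N) : x ∈ T := by
  by_contra hx
  have hNT : N ⊆ T := fun y hy => by
    by_contra hy'
    exact hT (hN y hy) (indicatorColoring_eq_indicatorColoring_iff.mpr (iff_of_false hx hy'))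
  exact (card_le_card hNT).not_gt hcard

theorem disjoint_of_isProperColoring_indicatorColoring {G : SimpleGraph α} {T N : Finset α}
    {x : α} (hT : IsProperColoring G (indicatorColoring T)) (hN : ∀ y ∈ N, G.Adj x y)
    (hx : x ∈ T) : Disjoint N T :=
  disjoint_left.mpr fun y hy hyT =>
    hT (hN y hy) (indicatorColoring_eq_indicatorColoring_iff.mpr (iff_of_true hx hyT))

theorem isPermutationOf_indicatorColoring {A S : Finset α} (h : #A = #S) :
    IsPermutationOf (indicatorColoring A) (indicatorColoring S) := by
  obtain ⟨σ, hσ⟩ := Equiv.Perm.exists_map_finset_eq A S h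
  refine ⟨σ, funext fun v => ?_⟩
  simp [indicatorColoring, ← hσ]

variable [Fintype α]

theorem recolorCount_indicatorColoring (A T : Finset α) :
    recolorCount (indicatorColoring A) (indicatorColoring T) = #(symmDiff A T) := by
  rw [recolorCount]
  congr 1
  ext v
  simp only [mem_filter, mem_univ, true_and, Finset.mem_symmDiff, ne_eq,
    indicatorColoring_eq_indicatorColoring_iff]
  tauto

theorem SameColorCounts.exists_eq_indicatorColoring {S : Finset α} {c : α → ℕ}
    (h : SameColorCounts (indicatorColoring S) c) :
    ∃ T : Finset α, c = indicatorColoring T ∧ #T = #S := by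
  have hval : ∀ v, c v = 0 ∨ c v = 1 := by
    intro v
    by_contra! hv
    have hempty : (univ.filter fun u => indicatorColoring S u = c v) = ∅ := by
      refine filter_eq_empty_iff.mpr fun u _ => ?_
      unfold indicatorColoring
      split_ifs <;> omega
    have hk := h (c v)
    rw [hempty, card_empty] at hk
    exact (card_pos.mpr ⟨v, by simp⟩).ne hk
  refine ⟨univ.filter fun v => c v = 1, funext fun v => ?_, ?_⟩
  · rcases hval v with hv | hv <;> simp [indicatorColoring, hv]
  · rw [← h 1]
    congr 1
    ext v
    simp [indicatorColoring]

theorem isOptimalColoring_indicatorColoring {G : SimpleGraph α} {S : Finset α} {u v : α}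
    (hS : IsProperColoring G (indicatorColoring S)) (huv : G.Adj u v) :
    IsOptimalColoring G (indicatorColoring S) := by
  have hcol : G.Colorable 2 := by
    simpa using (SimpleGraph.Coloring.mk (fun v => decide (v ∈ S)) fun huv => by
      simpa [indicatorColoring_eq_indicatorColoring_iff] using hS huv).colorable
  have hchrom : chromNum G = 2 := by
    rw [chromNum, le_antisymm hcol.chromaticNumber_le (G.two_le_chromaticNumber_of_adj huv)]
    rfl
  refine ⟨hS, le_antisymm ?_ ?_ |>.trans hchrom.symm⟩
  · calc #(univ.image (indicatorColoring S)) ≤ #({0, 1} : Finset ℕ) := by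
          refine card_le_card fun k hk => ?_
          obtain ⟨w, -, rfl⟩ := mem_image.mp hk
          unfold indicatorColoring
          split_ifs <;> simp
      _ = 2 := rfl
  · exact one_lt_card.mpr ⟨_, mem_image_of_mem _ (mem_univ u), _,
      mem_image_of_mem _ (mem_univ v), hS huv⟩

theorem two_mul_card_le_colVillainy {G : SimpleGraph α} {A N : Finset α} {x : α} {f : α → ℕ}
    (hf : IsProperColoring G f) (hAf : SameColorCounts (indicatorColoring A) f)
    (hN : ∀ y ∈ N, G.Adj x y) (hAN : A ⊆ N) (hcard : #A < #N) :
    2 * #A ≤ colVillainy G (indicatorColoring A) := by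
  refine le_colVillainy hf hAf fun c hc hAc => ?_
  obtain ⟨T, rfl, hTA⟩ := hAc.exists_eq_indicatorColoring
  have hxT := mem_of_isProperColoring_indicatorColoring hc hN (hTA ▸ hcard)
  have hAT := disjoint_of_isProperColoring_indicatorColoring hc (fun y hy => hN y (hAN hy)) hxT
  rw [recolorCount_indicatorColoring, hAT.symmDiff_eq_sup, sup_eq_union,
    card_union_of_disjoint hAT, hTA, two_mul]

end IndicatorColoring

theorem starGraph_adj {t : ℕ} {a b : Fin (t + 1)} :
    (starGraph t).Adj a b ↔ a ≠ b ∧ (a = 0 ∨ b = 0) := by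
  simp [starGraph]

theorem isProperColoring_starGraph_sum_bot (t : ℕ) {r : ℕ} (w : Fin r) :
    IsProperColoring (starGraph t ⊕g ⊥) (indicatorColoring {Sum.inl 0, Sum.inr w}) := by
  rintro (a | a) (b | b) hab
  · obtain ⟨hab, rfl | rfl⟩ := starGraph_adj.mp hab <;>
      simp [indicatorColoring, hab, Ne.symm hab]
  all_goals simp at hab

theorem villainy_star_plus_isolated (t r : ℕ) (ht : 3 ≤ t) (hr : 1 ≤ r) :
    4 ≤ villainy (starGraph t ⊕g (⊥ : SimpleGraph (Fin r))) ∧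
    villainy (starGraph t ⊕g (⊥ : SimpleGraph (Fin r))) ≠ 2 := by
  set N : Finset (Fin (t + 1) ⊕ Fin r) := univ.map ((Fin.succEmb t).trans .inl)
  set A : Finset (Fin (t + 1) ⊕ Fin r) :=
    {.inl (Fin.succ ⟨0, by omega⟩), .inl (Fin.succ ⟨1, by omega⟩)}
  set S : Finset (Fin (t + 1) ⊕ Fin r) := {.inl 0, .inr ⟨0, hr⟩}
  have hN : ∀ y ∈ N, (starGraph t ⊕g ⊥).Adj (.inl 0) y := by
    simp [N, starGraph_adj, (Fin.succ_ne_zero _).symm]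
  have hAN : A ⊆ N := by simp [A, N, insert_subset_iff]
  have hA : #A = 2 := by simp [A]
  have hNA : #A < #N := by rw [hA, card_map, card_univ, Fintype.card_fin]; omega
  have hf := isProperColoring_starGraph_sum_bot t ⟨0, hr⟩
  have hperm : IsPermutationOf (indicatorColoring A) (indicatorColoring S) :=
    isPermutationOf_indicatorColoring (by simp [hA, S])
  have hopt := isOptimalColoring_indicatorColoring hf (hN _ (hAN (mem_insert_self _ _)))
  have h4 := (two_mul_card_le_colVillainy hf hperm.sameColorCounts hN hAN hNA).trans
    (colVillainy_le_villainy hopt hperm)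
  rw [hA] at h4
  exact ⟨h4, by omega⟩
end
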